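/- Let p be prime and let G = (V,E) be a digraph on vertices {1,…,n} with designated output vertices {1,…,h}, h ≥ 1. Form the auxiliary digraph Ĝ by adding new vertices v₁⁻,…,v_h⁻ and edges (v_i, v_i⁻) for i = 1,…,h. If Ĝ can be covered by exactly h vertex-disjoint directed paths (every vertex of Ĝ lies on exactly one of the paths), then there exists a matrix A ∈ F_p^{n×n}, whose (j,i) entry is nonzero only if (v_i,v_j) ∈ E, such that the finite-field network x[k+1] = A x[k] over F_p with outputs y_p[k] = x_p[k] for p = 1,…,h is observable. -/
import Mathlib


open Matrix

/-- An injective directed path with consecutive edges. -/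
def IsPath {V : Type*} (E : V → V → Prop) {s : ℕ} (c : Fin (s + 1) → V) : Prop :=
  Function.Injective c ∧ ∀ k : Fin s, E (c k.castSucc) (c k.succ)

/-- Edge relation of the auxiliary digraph: the original digraph on `Fin n`
together with fresh output vertices `Fin h` and an edge from node `i` to the
`i`-th output vertex, for `i = 1, …, h`. -/
def auxE (n h : ℕ) (E : Fin n → Fin n → Prop) :
    (Fin n ⊕ Fin h) → (Fin n ⊕ Fin h) → Prop
  | Sum.inl i, Sum.inl j => E i j
  | Sum.inl i, Sum.inr q => (i : ℕ) = (q : ℕ)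
  | Sum.inr _, _ => False

/-- If the auxiliary digraph of a digraph with `h` designated output vertices
can be covered by exactly `h` vertex-disjoint directed paths, then there is an
assignment of weights in `F_p` respecting the digraph whose finite-field
network is observable. -/
theorem ffn_observable_of_disjoint_path_cover {p n h : ℕ} (hp : p.Prime)
    (hh1 : 1 ≤ h) (hhn : h ≤ n)
    (E : Fin n → Fin n → Prop)
    (hcover : ∃ (ℓ : Fin h → ℕ) (c : (i : Fin h) → Fin (ℓ i + 1) → (Fin n ⊕ Fin h)),
      (∀ i, IsPath (auxE n h E) (c i)) ∧
      (Pairwise fun i j => Disjoint (Set.range (c i)) (Set.range (c j))) ∧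
      (⋃ i, Set.range (c i)) = Set.univ) :
    ∃ A : Matrix (Fin n) (Fin n) (ZMod p),
      (∀ i j : Fin n, A j i ≠ 0 → E i j) ∧
      ∀ x y : Fin n → ZMod p, x ≠ y →
        ∃ (k : ℕ) (q : Fin n), (q : ℕ) < h ∧
          ((A ^ k) *ᵥ x) q ≠ ((A ^ k) *ᵥ y) q := by
  classical
  haveI := Fact.mk hp
  obtain ⟨ℓ, c, hpath, hdisj, hcov⟩ := hcover
  -- global uniqueness of positions
  have huniq : ∀ (i j : Fin h) (t : Fin (ℓ i + 1)) (s : Fin (ℓ j + 1)),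
      c i t = c j s → i = j := by
    intro i j t s hts
    by_contra hne
    exact (Set.disjoint_left.mp (hdisj hne) ⟨t, rfl⟩) ⟨s, hts.symm⟩
  have huniq2 : ∀ (i : Fin h) (t s : Fin (ℓ i + 1)), c i t = c i s → t = s :=
    fun i t s hts => (hpath i).1 hts
  have hmem : ∀ z : Fin n ⊕ Fin h, ∃ i t, c i t = z := by
    intro z
    have hz : z ∈ ⋃ i, Set.range (c i) := hcov ▸ Set.mem_univ z
    simpa [Set.mem_iUnion] using hz
  -- any output vertex sits at the last position of its path
  have hinr_last : ∀ (i : Fin h) (t : Fin (ℓ i + 1)) (q : Fin h),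
      c i t = Sum.inr q → t = Fin.last (ℓ i) := by
    intro i t q hq
    by_contra hne
    have htl : (t : ℕ) < ℓ i :=
      lt_of_le_of_ne (Nat.lt_succ_iff.mp t.isLt) (fun hh => hne (Fin.ext hh))
    have hedge := (hpath i).2 ⟨(t : ℕ), htl⟩
    have hcs : (⟨(t : ℕ), htl⟩ : Fin (ℓ i)).castSucc = t := Fin.ext rfl
    rw [hcs, hq] at hedge
    exact hedge
  -- each path ends at an output vertex
  have hlast : ∀ i : Fin h, ∃ q : Fin h, c i (Fin.last (ℓ i)) = Sum.inr q := by
    have hq : ∀ q : Fin h, ∃ i, c i (Fin.last (ℓ i)) = Sum.inr q := by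
      intro q
      obtain ⟨i, t, ht⟩ := hmem (Sum.inr q)
      exact ⟨i, (hinr_last i t q ht) ▸ ht⟩
    choose f hf using hq
    have hinj : Function.Injective f := by
      intro q1 q2 he
      have h1 := hf q1
      rw [he] at h1
      exact Sum.inr_injective (h1.symm.trans (hf q2))
    have hsurj := Finite.injective_iff_surjective.mp hinj
    intro i
    obtain ⟨q, hq'⟩ := hsurj i
    subst hq'
    exact ⟨q, hf q⟩
  -- non-last positions carry nodes
  have hinl : ∀ (i : Fin h) (t : Fin (ℓ i + 1)), (t : ℕ) < ℓ i →
      ∃ v : Fin n, c i t = Sum.inl v := by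
    intro i t ht
    cases hz : c i t with
    | inl v => exact ⟨v, rfl⟩
    | inr q =>
      have h' := hinr_last i t q hz
      rw [h'] at ht
      simp at ht
  set A : Matrix (Fin n) (Fin n) (ZMod p) := Matrix.of (fun j i : Fin n =>
    if ∃ (a : Fin h) (k : Fin (ℓ a)), c a k.castSucc = Sum.inl i ∧ c a k.succ = Sum.inl j
    then (1 : ZMod p) else 0) with hA
  have hAapp : ∀ j i : Fin n, A j i =
      if ∃ (a : Fin h) (k : Fin (ℓ a)), c a k.castSucc = Sum.inl i ∧ c a k.succ = Sum.inl j
      then (1 : ZMod p) else 0 := fun j i => rfl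
  -- one step of the dynamics along a path edge
  have hstep : ∀ (i : Fin h) (k : Fin (ℓ i)) (v w : Fin n),
      c i k.castSucc = Sum.inl v → c i k.succ = Sum.inl w →
      ∀ x : Fin n → ZMod p, (A *ᵥ x) w = x v := by
    intro i k v w hv hw x
    have hrow : ∀ u, A w u = if u = v then (1 : ZMod p) else 0 := by
      intro u
      rw [hAapp]
      by_cases hu : u = v
      · subst hu
        rw [if_pos ⟨i, k, hv, hw⟩, if_pos rfl]
      · rw [if_neg hu, if_neg ?_]
        rintro ⟨a, k', h1, h2⟩
        have hai : a = i := huniq a i k'.succ k.succ (h2.trans hw.symm)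
        subst hai
        have hkk : k'.succ = k.succ := huniq2 a _ _ (h2.trans hw.symm)
        have hkk' : k' = k := Fin.succ_injective _ hkk
        subst hkk'
        exact hu (Sum.inl_injective (h1.symm.trans hv))
    have : (A *ᵥ x) w = ∑ u, A w u * x u := rfl
    rw [this]
    simp_rw [hrow]
    simp
  -- iterated dynamics along a path
  have key : ∀ d : ℕ, ∀ (i : Fin h) (a b : Fin (ℓ i + 1)), (a : ℕ) + d = (b : ℕ) →
      ∀ v w : Fin n, c i a = Sum.inl v → c i b = Sum.inl w →
      ∀ x : Fin n → ZMod p, ((A ^ d) *ᵥ x) w = x v := by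
    intro d
    induction d with
    | zero =>
      intro i a b hab v w hv hw x
      have hba : a = b := Fin.ext (by omega)
      subst hba
      obtain rfl : v = w := Sum.inl_injective (hv.symm.trans hw)
      simp
    | succ d ih =>
      intro i a b hab v w hv hw x
      have hb1 : 1 ≤ (b : ℕ) := by omega
      have hbl : (b : ℕ) ≤ ℓ i := Nat.lt_succ_iff.mp b.isLt
      have hklt : (b : ℕ) - 1 < ℓ i := by omega
      set k : Fin (ℓ i) := ⟨(b : ℕ) - 1, hklt⟩ with hk
      have hks : k.succ = b := Fin.ext (by simp [hk]; omega)
      have hkcv : ((k.castSucc : Fin (ℓ i + 1)) : ℕ) = (b : ℕ) - 1 := rfl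
      obtain ⟨u, hu⟩ := hinl i k.castSucc (by omega)
      have e1 : ((A ^ (d + 1)) *ᵥ x) w = (A *ᵥ ((A ^ d) *ᵥ x)) w := by
        rw [Matrix.mulVec_mulVec, ← pow_succ']
      rw [e1, hstep i k u w hu (by rw [hks]; exact hw) ((A ^ d) *ᵥ x)]
      exact ih i a k.castSucc (by omega) v u hv hu x
  refine ⟨A, ?_, ?_⟩
  · intro i j hne
    rw [hAapp] at hne
    by_cases hP : ∃ (a : Fin h) (k : Fin (ℓ a)),
        c a k.castSucc = Sum.inl i ∧ c a k.succ = Sum.inl j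
    · obtain ⟨a, k, h1, h2⟩ := hP
      have hedge := (hpath a).2 k
      rw [h1, h2] at hedge
      exact hedge
    · rw [if_neg hP] at hne
      exact absurd rfl hne
  · intro x y hxy
    obtain ⟨v, hv⟩ : ∃ v, x v ≠ y v := Function.ne_iff.mp hxy
    obtain ⟨i, t, ht⟩ := hmem (Sum.inl v)
    have htl : (t : ℕ) < ℓ i := by
      by_contra h'
      have hlt : t = Fin.last (ℓ i) := Fin.ext (by simp only [Fin.val_last]; have := Nat.lt_succ_iff.mp t.isLt; omega)
      obtain ⟨q, hqq⟩ := hlast i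
      rw [hlt] at ht
      exact absurd (hqq.symm.trans ht) (by simp)
    have hl1 : 1 ≤ ℓ i := by omega
    have hbl : ℓ i - 1 < ℓ i + 1 := by omega
    set b : Fin (ℓ i + 1) := ⟨ℓ i - 1, hbl⟩ with hb
    obtain ⟨w, hw⟩ := hinl i b (by show ℓ i - 1 < ℓ i; omega)
    obtain ⟨q, hqq⟩ := hlast i
    have hkl : ℓ i - 1 < ℓ i := by omega
    set k : Fin (ℓ i) := ⟨ℓ i - 1, hkl⟩ with hk
    have hedge := (hpath i).2 k
    have hkc : k.castSucc = b := Fin.ext rfl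
    have hks : k.succ = Fin.last (ℓ i) :=
      Fin.ext (by simp only [Fin.val_succ, Fin.val_last, hk]; omega)
    rw [hkc, hks, hw, hqq] at hedge
    have hwq : (w : ℕ) = (q : ℕ) := hedge
    have hwh : (w : ℕ) < h := by have := q.isLt; omega
    refine ⟨ℓ i - 1 - (t : ℕ), w, hwh, ?_⟩
    have hnat : (t : ℕ) + (ℓ i - 1 - (t : ℕ)) = (b : ℕ) := by
      show (t : ℕ) + (ℓ i - 1 - (t : ℕ)) = ℓ i - 1
      omega
    rw [key (ℓ i - 1 - (t : ℕ)) i t b hnat v w ht hw x,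
        key (ℓ i - 1 - (t : ℕ)) i t b hnat v w ht hw y]
    exact hv
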